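/- Let N be prime, let X_{i,j} for i < j index pairs of received symbols from different stream objects with independent uniform SOPIs, where X_{i,j} = 1 iff the two symbols have the same symbol ID. If M² ≤ 2N where M is the total number of received symbols, then E[(Σ_{i<j} X_{i,j})²] ≤ M²/N. -/

import Mathlib

/-!
Write `P t = (A_t, B_t)` for the SOPI of stream `t`. Expanding the square turns the numerator
into `∑_{q, q'} #{P : both q and q' collide}` over ordered pairs of cross-stream symbol pairs,
and each such count is bounded by resampling coordinates of `P` injectively. A single collision
between streams `i ≠ j` fixes `A_j` given the rest of `P` (fraction `1/N`). Two distinct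
collisions on the same streams `i, j` force `(p - p₁) B_i = (p' - p₁') B_j` with `p' ≠ p₁'`,
which fixes all of `P j` (fraction `1/(N(N-1))`). Collisions on different stream pairs fix the
offsets `A` of two different streams (fraction `1/N² ≤ 1/(N(N-1))`). As there are at most
`M²/2 ≤ N` cross pairs, each row of the double sum is at most `1/N + (N - 1)/(N(N-1)) = 2/N`,
so the whole sum is at most `M²/N`.
-/

open Finset Function

lemma card_mul_card_le_of_injOn {α β γ : Type*} [Fintype β] {S : Finset α} {T : Finset γ}
    (F : α → β → γ) (hF : ∀ x ∈ S, ∀ b, F x b ∈ T)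
    (hinj : ∀ x ∈ S, ∀ x' ∈ S, ∀ b b', F x b = F x' b' → x = x' ∧ b = b') :
    Fintype.card β * #S ≤ #T := by
  calc Fintype.card β * #S = #(S ×ˢ (univ : Finset β)) := by
        rw [card_product, card_univ, mul_comm]
    _ ≤ #T := card_le_card_of_injOn (fun x => F x.1 x.2)
        (fun x hx => hF _ (mem_product.1 hx).1 _)
        (fun x hx y hy hxy =>
          Prod.ext_iff.2 (hinj _ (mem_product.1 hx).1 _ (mem_product.1 hy).1 _ _ hxy))

lemma sum_card_filter_sq {α β : Type*} [DecidableEq α] (G : Finset α) (Q : Finset β)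
    (R : α → β → Prop) [∀ a b, Decidable (R a b)] :
    ∑ a ∈ G, #(Q.filter (R a)) ^ 2 =
      ∑ q ∈ Q, ∑ q' ∈ Q, #(G.filter (R · q) ∩ G.filter (R · q')) := by
  simp only [← filter_and, card_filter, sq, sum_mul_sum, ite_zero_mul_ite_zero, mul_one]
  rw [sum_comm]
  exact sum_congr rfl fun q _ => sum_comm

lemma two_mul_card_filter_lt_le {α : Type*} [Fintype α] [LinearOrder α] :
    2 * #(univ.filter fun q : α × α => q.1 < q.2) ≤ Fintype.card α ^ 2 := by
  set L := univ.filter fun q : α × α => q.1 < q.2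
  have hdisj : Disjoint L (L.image Prod.swap) := by
    simp only [L, disjoint_left, mem_filter, mem_image, mem_univ, true_and]
    rintro q hq ⟨q', hq', rfl⟩
    exact lt_asymm hq hq'
  calc 2 * #L = #(L ∪ L.image Prod.swap) := by
        rw [card_union_of_disjoint hdisj, card_image_of_injective _ Prod.swap_injective, two_mul]
    _ ≤ Fintype.card α ^ 2 := by
        rw [sq, ← Fintype.card_prod]; exact card_le_univ _

lemma mul_sum_sum_le {κ : Type*} [DecidableEq κ] (Q : Finset κ) {n g : ℕ}
    (c : κ → κ → ℕ) (hn : 1 < n) (hQ : #Q ≤ n) (hdiag : ∀ q ∈ Q, n * c q q ≤ g)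
    (hoff : ∀ q ∈ Q, ∀ q' ∈ Q, q ≠ q' → n * (n - 1) * c q q' ≤ g) :
    n * ∑ q ∈ Q, ∑ q' ∈ Q, c q q' ≤ 2 * #Q * g := by
  have hrow : ∀ q ∈ Q, n * ∑ q' ∈ Q, c q q' ≤ 2 * g := by
    intro q hq
    refine Nat.le_of_mul_le_mul_left ?_ (Nat.sub_pos_of_lt hn)
    have hrest : ∑ q' ∈ Q.erase q, n * (n - 1) * c q q' ≤ (#Q - 1) * g := by
      rw [← card_erase_of_mem hq, ← smul_eq_mul]
      exact sum_le_card_nsmul _ _ _ fun q' hq' =>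
        hoff q hq q' (mem_of_mem_erase hq') (ne_of_mem_erase hq').symm
    calc (n - 1) * (n * ∑ q' ∈ Q, c q q')
        = (n - 1) * (n * c q q) + ∑ q' ∈ Q.erase q, n * (n - 1) * c q q' := by
          rw [← add_sum_erase _ _ hq, mul_add, mul_add, mul_sum, mul_sum]
          congr 1
          exact sum_congr rfl fun _ _ => by ring
      _ ≤ (n - 1) * g + (n - 1) * g := by
          gcongr
          · exact hdiag q hq
          · exact hrest.trans (Nat.mul_le_mul_right _ (by omega))
      _ = (n - 1) * (2 * g) := by ring
  calc n * ∑ q ∈ Q, ∑ q' ∈ Q, c q q' ≤ ∑ _q ∈ Q, 2 * g := by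
        rw [mul_sum]; exact sum_le_sum hrow
    _ = 2 * #Q * g := by rw [sum_const, smul_eq_mul, mul_left_comm, mul_assoc]

section Update

variable {ι α : Type*} [DecidableEq ι]

lemma eq_of_eq_of_forall_ne_eq {P P' : ι → α} {j : ι} (hj : P j = P' j)
    (hoff : ∀ t ≠ j, P t = P' t) : P = P' := by
  rw [← update_eq_self j P', ← hj]
  exact eq_update_iff.2 ⟨rfl, hoff⟩

lemma card_mul_card_le_of_update (j : ι) (U : Finset α) {S T : Finset (ι → α)}
    (hT : ∀ P ∈ S, ∀ u ∈ U, update P j u ∈ T)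
    (hS : ∀ P ∈ S, ∀ P' ∈ S, (∀ t ≠ j, P t = P' t) → P = P') :
    #U * #S ≤ #T := by
  rw [← Fintype.card_coe U]
  refine card_mul_card_le_of_injOn (fun P (u : U) => update P j u)
    (fun P hP u => hT P hP u u.2) fun P hP P' hP' u u' h => ?_
  obtain ⟨hu, hoff⟩ := update_eq_iff.1 h
  simp only [update_self] at hu
  refine ⟨hS P hP P' hP' fun t ht => ?_, Subtype.ext hu⟩
  rw [hoff t ht, update_of_ne ht]

lemma card_mul_card_le_of_update_fst {β : Type*} [Fintype α] (j : ι)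
    {S T : Finset (ι → α × β)}
    (hT : ∀ P ∈ S, ∀ a, update P j (a, (P j).2) ∈ T)
    (hS : ∀ P ∈ S, ∀ P' ∈ S, (∀ t ≠ j, P t = P' t) → (P j).2 = (P' j).2 → P = P') :
    Fintype.card α * #S ≤ #T := by
  refine card_mul_card_le_of_injOn (fun P a => update P j (a, (P j).2)) hT
    fun P hP P' hP' a a' h => ?_
  obtain ⟨hu, hoff⟩ := update_eq_iff.1 h
  simp only [update_self, Prod.mk.injEq] at hu
  refine ⟨hS P hP P' hP' (fun t ht => ?_) hu.2, hu.1⟩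
  rw [hoff t ht, update_of_ne ht]

end Update

section SymbolId

variable {ι F : Type*} [DecidableEq ι] [CommRing F]

def symbolId (P : ι → F × F) (x : ι × F) : F := (P x.1).1 + x.2 * (P x.1).2

lemma symbolId_update_of_ne (P : ι → F × F) {j : ι} (v : F × F) {x : ι × F}
    (hx : x.1 ≠ j) :
    symbolId (update P j v) x = symbolId P x := by
  simp only [symbolId, update_of_ne hx]

lemma eq_of_symbolId_eq {P P' : ι → F × F} {x y : ι × F} (hxy : x.1 ≠ y.1)
    (hP : symbolId P x = symbolId P y) (hP' : symbolId P' x = symbolId P' y)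
    (hoff : ∀ t ≠ y.1, P t = P' t) (hB : (P y.1).2 = (P' y.1).2) : P = P' := by
  refine eq_of_eq_of_forall_ne_eq (Prod.ext ?_ hB) hoff
  simp only [symbolId, hoff x.1 hxy] at hP hP'
  linear_combination hP' - hP - y.2 * hB

end SymbolId

lemma snd_eq_of_symbolId_eq_of_symbolId_eq {ι F : Type*} [Field F] {P : ι → F × F}
    {x y x' y' : ι × F}
    (hB : (P x.1).2 ≠ 0) (hx : x'.1 = x.1) (hy : y'.1 = y.1) (hne : (x, y) ≠ (x', y'))
    (hE : symbolId P x = symbolId P y) (hE' : symbolId P x' = symbolId P y') :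
    (P y.1).2 = (x.2 - x'.2) / (y.2 - y'.2) * (P x.1).2 := by
  simp only [symbolId, hx, hy] at hE hE'
  have hsub : (x.2 - x'.2) * (P x.1).2 = (y.2 - y'.2) * (P y.1).2 := by
    linear_combination hE - hE'
  have hdy : y.2 - y'.2 ≠ 0 := by
    intro h0
    rw [h0, zero_mul, mul_eq_zero, or_iff_left hB, sub_eq_zero] at hsub
    exact hne (Prod.ext (Prod.ext hx.symm hsub) (Prod.ext hy.symm (sub_eq_zero.1 h0)))
  rw [div_mul_eq_mul_div, eq_div_iff hdy]
  linear_combination -hsub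

section SOPI

variable {ι F : Type*} [Fintype ι] [DecidableEq ι] [Field F] [Fintype F] [DecidableEq F]

variable (ι F) in
def sopis : Finset (ι → F × F) := univ.filter fun P => ∀ t, (P t).2 ≠ 0

def collisions (x y : ι × F) : Finset (ι → F × F) :=
  (sopis ι F).filter fun P => symbolId P x = symbolId P y

lemma mem_sopis {P : ι → F × F} : P ∈ sopis ι F ↔ ∀ t, (P t).2 ≠ 0 := by
  simp [sopis]

lemma update_mem_sopis {P : ι → F × F} (hP : P ∈ sopis ι F) (j : ι) {v : F × F}
    (hv : v.2 ≠ 0) : update P j v ∈ sopis ι F := by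
  rw [mem_sopis] at hP ⊢
  intro t
  rcases eq_or_ne t j with rfl | ht
  · rwa [update_self]
  · rw [update_of_ne ht]; exact hP t

lemma collisions_subset_sopis {x y : ι × F} : collisions x y ⊆ sopis ι F :=
  filter_subset _ _

lemma collisions_comm (x y : ι × F) : collisions x y = collisions y x :=
  filter_congr fun _ _ => eq_comm

lemma card_mul_card_collisions_inter_le {x y : ι × F} (hxy : x.1 ≠ y.1)
    (T : Finset (ι → F × F)) (hT : ∀ P ∈ T, ∀ a, update P y.1 (a, (P y.1).2) ∈ T) :
    Fintype.card F * #(collisions x y ∩ T) ≤ #T :=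
  card_mul_card_le_of_update_fst y.1 (fun P hP a => hT P (mem_inter.1 hP).2 a)
    fun _ hP _ hP' hoff hB => eq_of_symbolId_eq hxy
      (mem_filter.1 (mem_inter.1 hP).1).2 (mem_filter.1 (mem_inter.1 hP').1).2 hoff hB

lemma card_mul_card_collisions_le {x y : ι × F} (hxy : x.1 ≠ y.1) :
    Fintype.card F * #(collisions x y) ≤ #(sopis ι F) := by
  have h := card_mul_card_collisions_inter_le hxy (sopis ι F) fun P hP _ =>
    update_mem_sopis hP _ (mem_sopis.1 hP _)
  rwa [inter_eq_left.2 collisions_subset_sopis] at h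

lemma card_mul_card_collisions_inter_collisions_le_of_same_streams {x y x' y' : ι × F}
    (hxy : x.1 ≠ y.1) (hx : x'.1 = x.1) (hy : y'.1 = y.1) (hne : (x, y) ≠ (x', y')) :
    Fintype.card F * (Fintype.card F - 1) * #(collisions x y ∩ collisions x' y') ≤
      #(sopis ι F) := by
  have hU : #((univ : Finset F) ×ˢ univ.erase (0 : F)) =
      Fintype.card F * (Fintype.card F - 1) := by
    rw [card_product, card_erase_of_mem (mem_univ _), card_univ]
  rw [← hU]
  refine card_mul_card_le_of_update y.1 _ (fun P hP v hv => ?_) fun P hP P' hP' hoff => ?_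
  · exact update_mem_sopis (mem_filter.1 (mem_inter.1 hP).1).1 _
      (ne_of_mem_erase (mem_product.1 hv).2)
  · simp only [collisions, mem_inter, mem_filter] at hP hP'
    obtain ⟨⟨hPs, hE⟩, -, hE'⟩ := hP
    obtain ⟨⟨hPs', hF⟩, -, hF'⟩ := hP'
    refine eq_of_symbolId_eq hxy hE hF hoff ?_
    rw [snd_eq_of_symbolId_eq_of_symbolId_eq (mem_sopis.1 hPs _) hx hy hne hE hE',
      snd_eq_of_symbolId_eq_of_symbolId_eq (mem_sopis.1 hPs' _) hx hy hne hF hF', hoff x.1 hxy]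

lemma card_mul_card_collisions_inter_collisions_le_of_ne {x y x' y' : ι × F}
    (hxy : x.1 ≠ y.1) (hx'y' : x'.1 ≠ y'.1) (hx' : x'.1 ≠ y.1) (hy' : y'.1 ≠ y.1) :
    Fintype.card F * Fintype.card F * #(collisions x y ∩ collisions x' y') ≤ #(sopis ι F) := by
  refine (mul_assoc _ _ _).trans_le <| (Nat.mul_le_mul_left _
    (card_mul_card_collisions_inter_le hxy _ fun P hP a => ?_)).trans
    (card_mul_card_collisions_le hx'y')
  obtain ⟨hPs, hE⟩ := mem_filter.1 hP
  refine mem_filter.2 ⟨update_mem_sopis hPs _ (mem_sopis.1 hPs _), ?_⟩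
  rwa [symbolId_update_of_ne _ _ hx', symbolId_update_of_ne _ _ hy']

lemma card_mul_card_collisions_inter_collisions_le {x y x' y' : ι × F}
    (hxy : x.1 ≠ y.1) (hx'y' : x'.1 ≠ y'.1) (hne : (x, y) ≠ (x', y'))
    (hne' : (x, y) ≠ (y', x')) :
    Fintype.card F * (Fintype.card F - 1) * #(collisions x y ∩ collisions x' y') ≤
      #(sopis ι F) := by
  by_cases hsame : x'.1 = x.1 ∧ y'.1 = y.1
  · exact card_mul_card_collisions_inter_collisions_le_of_same_streams hxy hsame.1 hsame.2 hne
  by_cases hrev : y'.1 = x.1 ∧ x'.1 = y.1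
  · rw [collisions_comm x' y']
    exact card_mul_card_collisions_inter_collisions_le_of_same_streams hxy hrev.1 hrev.2 hne'
  refine (Nat.mul_le_mul_right _ (Nat.mul_le_mul_left _ (Nat.sub_le _ 1))).trans ?_
  by_cases hy : x'.1 ≠ y.1 ∧ y'.1 ≠ y.1
  · exact card_mul_card_collisions_inter_collisions_le_of_ne hxy hx'y' hy.1 hy.2
  · have hx : x'.1 ≠ x.1 ∧ y'.1 ≠ x.1 := by grind
    rw [collisions_comm x y]
    exact card_mul_card_collisions_inter_collisions_le_of_ne (Ne.symm hxy) hx'y' hx.1 hx.2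

variable {α : Type*} [Fintype α] [LinearOrder α]

def crossPairs (f : α → ι × F) : Finset (α × α) :=
  univ.filter fun q => q.1 < q.2 ∧ (f q.1).1 ≠ (f q.2).1

theorem card_mul_sum_card_filter_symbolId_eq_sq_le (f : α → ι × F) (hf : Injective f)
    (hM : Fintype.card α ^ 2 ≤ 2 * Fintype.card F) :
    Fintype.card F * ∑ P ∈ sopis ι F,
        #((crossPairs f).filter fun q => symbolId P (f q.1) = symbolId P (f q.2)) ^ 2
      ≤ Fintype.card α ^ 2 * #(sopis ι F) := by
  have hQ : 2 * #(crossPairs f) ≤ Fintype.card α ^ 2 :=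
    (Nat.mul_le_mul_left 2 (card_le_card (monotone_filter_right _ fun _ _ h => h.1))).trans
      two_mul_card_filter_lt_le
  rw [sum_card_filter_sq]
  refine (mul_sum_sum_le _ _ Fintype.one_lt_card (by omega) (fun q hq => ?_)
    fun q hq q' hq' hqq' => ?_).trans (Nat.mul_le_mul_right _ hQ)
  · rw [inter_self]
    exact card_mul_card_collisions_le (mem_filter.1 hq).2.2
  · obtain ⟨hlt, hstreams⟩ := (mem_filter.1 hq).2
    obtain ⟨hlt', hstreams'⟩ := (mem_filter.1 hq').2
    refine card_mul_card_collisions_inter_collisions_le hstreams hstreams' ?_ ?_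
    · intro h
      simp only [Prod.mk.injEq, hf.eq_iff] at h
      exact hqq' (Prod.ext h.1 h.2)
    · intro h
      simp only [Prod.mk.injEq, hf.eq_iff] at h
      exact lt_asymm (h.1 ▸ hlt') (h.2 ▸ hlt)

end SOPI

/-- `N` prime; received symbol `k : Fin M` comes from stream
`(f k).1` at position `(f k).2` (distinct (stream, position) pairs), with
symbol ID `A + p·B` for its stream's independent uniform SOPI `(A,B)`.
For a SOPI assignment `P`, the sum `Σ_{k<l} X_{k,l}` of collision indicators
over pairs of received symbols from different streams is the number of pairs
`(k,l)`, `k < l`, from different streams with equal symbol IDs.  If `M² ≤ 2N`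
then `E[(Σ_{k<l} X_{k,l})²] ≤ M²/N`. -/
theorem sopi_second_moment_bound (N s M : ℕ) (hN : N.Prime) [NeZero N]
    (hM2 : (M : ℝ) ^ 2 ≤ 2 * N)
    (f : Fin M → Fin s × ZMod N) (hf : Function.Injective f) :
    (∑ P ∈ (Finset.univ.filter (fun P : Fin s → ZMod N × ZMod N => ∀ t, (P t).2 ≠ 0)),
        ((Finset.univ.filter (fun q : Fin M × Fin M =>
            q.1 < q.2 ∧ (f q.1).1 ≠ (f q.2).1 ∧
            (P (f q.1).1).1 + (f q.1).2 * (P (f q.1).1).2 =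
              (P (f q.2).1).1 + (f q.2).2 * (P (f q.2).1).2)).card : ℝ) ^ 2) /
      ((Finset.univ.filter (fun P : Fin s → ZMod N × ZMod N => ∀ t, (P t).2 ≠ 0)).card : ℝ)
      ≤ (M : ℝ) ^ 2 / N := by
  have := Fact.mk hN
  have key := card_mul_sum_card_filter_symbolId_eq_sq_le f hf (by
    rw [ZMod.card, Fintype.card_fin]; exact_mod_cast hM2)
  simp only [ZMod.card, Fintype.card_fin, crossPairs] at key
  rw [sum_congr rfl fun P _ => by rw [filter_filter]] at key
  simp only [and_assoc, symbolId, sopis] at key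
  rw [div_le_div_iff₀ (Nat.cast_pos.2 (card_pos.2 ⟨fun _ => (0, 1), by simp⟩))
    (by exact_mod_cast hN.pos), mul_comm]
  exact_mod_cast key
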